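/- arXiv:2407.00216 — 2 statements merged into one kernel-verified Lean document; each statement's English description precedes it below -/
import Mathlib

section
/- (Boundedness of the bridge jump rates away from the terminal state.) Assume Q_{ab} > 0 for all a ≠ b, and define for t ∈ [0,T₀) the bridge generator Q^y_{ab}(t) := ( Q_{ab} P_{by}(T₀−t) − 1_{a=b} (Q P(T₀−t))_{by} ) / P_{ay}(T₀−t). Then for all a,b,y ∈ 𝒳 with a ≠ b and b ≠ y, one has sup_{t∈[0,T₀)} Q^y_{ab}(t) < ∞. -/
open MeasureTheory ProbabilityTheory Filter
open scoped ENNReal Classical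

noncomputable section

/-- Transition semigroup `P(t) = exp(tQ)` of a generator matrix `Q`. -/
def Pmat {𝒳 : Type*} [Fintype 𝒳] [DecidableEq 𝒳] (Q : Matrix 𝒳 𝒳 ℝ) (t : ℝ) :
    Matrix 𝒳 𝒳 ℝ :=
  NormedSpace.exp (t • Q)

/-- The time-dependent generator `Q^y_{ab}(t)` of the bridge. -/
def Qbridge {𝒳 : Type*} [Fintype 𝒳] [DecidableEq 𝒳] (Q : Matrix 𝒳 𝒳 ℝ) (T₀ : ℝ)
    (y : 𝒳) (t : ℝ) (a b : 𝒳) : ℝ :=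
  (Q a b * Pmat Q (T₀ - t) b y - (if a = b then (1 : ℝ) else 0) * (Q * Pmat Q (T₀ - t)) b y) /
    Pmat Q (T₀ - t) a y

section Aux

variable {𝒳 : Type*} [Fintype 𝒳] [DecidableEq 𝒳]

lemma hasSum_exp_entry (M : Matrix 𝒳 𝒳 ℝ) (i j : 𝒳) :
    HasSum (fun n : ℕ => ((Nat.factorial n : ℝ))⁻¹ * (M ^ n) i j) (NormedSpace.exp M i j) := by
  letI : SeminormedRing (Matrix 𝒳 𝒳 ℝ) := Matrix.linftyOpSemiNormedRing
  letI : NormedRing (Matrix 𝒳 𝒳 ℝ) := Matrix.linftyOpNormedRing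
  letI : NormedAlgebra ℝ (Matrix 𝒳 𝒳 ℝ) := Matrix.linftyOpNormedAlgebra
  have h : HasSum (fun n : ℕ => ((Nat.factorial n : ℝ))⁻¹ • M ^ n) (NormedSpace.exp M) :=
    NormedSpace.exp_series_hasSum_exp' M
  have h2 := (Pi.hasSum.mp ((Pi.hasSum.mp h) i)) j
  simpa [Matrix.smul_apply, smul_eq_mul] using h2

lemma mat_pow_nonneg {A : Matrix 𝒳 𝒳 ℝ} (hA : ∀ i j, 0 ≤ A i j) :
    ∀ n i j, 0 ≤ (A ^ n) i j := by
  intro n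
  induction n with
  | zero =>
    intro i j
    simp only [pow_zero, Matrix.one_apply]
    split <;> norm_num
  | succ n ih =>
    intro i j
    rw [pow_succ, Matrix.mul_apply]
    exact Finset.sum_nonneg fun k _ => mul_nonneg (ih i k) (hA k j)

lemma mat_pow_le {A : Matrix 𝒳 𝒳 ℝ} (hA : ∀ i j, 0 ≤ A i j) {m : ℝ} (hm : ∀ i j, A i j ≤ m)
    (hm0 : 0 ≤ m) :
    ∀ n i j, (A ^ (n + 1)) i j ≤ m * ((Fintype.card 𝒳 : ℝ) * m) ^ n := by
  intro n
  induction n with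
  | zero => intro i j; simpa using hm i j
  | succ n ih =>
    intro i j
    rw [pow_succ, Matrix.mul_apply]
    calc ∑ k, (A ^ (n + 1)) i k * A k j
        ≤ ∑ _k : 𝒳, (m * ((Fintype.card 𝒳 : ℝ) * m) ^ n) * m := by
          refine Finset.sum_le_sum fun k _ => ?_
          exact mul_le_mul (ih i k) (hm k j) (hA k j)
            (mul_nonneg hm0 (pow_nonneg (mul_nonneg (Nat.cast_nonneg _) hm0) n))
      _ = (Fintype.card 𝒳 : ℝ) * ((m * ((Fintype.card 𝒳 : ℝ) * m) ^ n) * m) := by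
          rw [Finset.sum_const, Finset.card_univ, nsmul_eq_mul]
      _ = m * ((Fintype.card 𝒳 : ℝ) * m) ^ (n + 1) := by ring

lemma exp_entry_ge {B : Matrix 𝒳 𝒳 ℝ} (hB : ∀ i j, 0 ≤ B i j) (n : ℕ) (i j : 𝒳) :
    ((Nat.factorial n : ℝ))⁻¹ * (B ^ n) i j ≤ NormedSpace.exp B i j :=
  le_hasSum (hasSum_exp_entry B i j) n fun k _ =>
    mul_nonneg (inv_nonneg.mpr (Nat.cast_nonneg _)) (mat_pow_nonneg hB k i j)

lemma exp_entry_le {A : Matrix 𝒳 𝒳 ℝ} (hA : ∀ i j, 0 ≤ A i j) {m : ℝ} (hm : ∀ i j, A i j ≤ m)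
    (hm0 : 0 ≤ m) {s : ℝ} (hs : 0 ≤ s) {b y : 𝒳} (hby : b ≠ y) :
    NormedSpace.exp (s • A) b y ≤ s * m * Real.exp (s * (Fintype.card 𝒳 : ℝ) * m) := by
  set N : ℝ := (Fintype.card 𝒳 : ℝ) with hN
  have hN0 : 0 ≤ N := Nat.cast_nonneg _
  set h : ℕ → ℝ := fun n =>
    if n = 0 then 0 else (s * m) * ((s * N * m) ^ (n - 1) / Nat.factorial (n - 1)) with hh
  have hexp : HasSum (fun k : ℕ => (s * N * m) ^ k / (Nat.factorial k : ℝ))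
      (Real.exp (s * N * m)) := by
    rw [Real.exp_eq_exp_ℝ]
    exact NormedSpace.expSeries_div_hasSum_exp _
  have h2 : HasSum (fun k : ℕ => (s * m) * ((s * N * m) ^ k / (Nat.factorial k : ℝ)))
      (s * m * Real.exp (s * N * m)) := hexp.mul_left _
  have hcomp : (h ∘ Nat.succ) =
      fun k : ℕ => (s * m) * ((s * N * m) ^ k / (Nat.factorial k : ℝ)) := by
    funext k
    simp [hh, Function.comp]
  have hsumh : HasSum h (s * m * Real.exp (s * N * m)) := by
    rw [← Function.Injective.hasSum_iff Nat.succ_injective ?side]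
    · rw [hcomp]; exact h2
    case side =>
      intro x hx
      have hx0 : x = 0 := by
        rcases x with _ | x
        · rfl
        · exact absurd ⟨x, rfl⟩ hx
      simp [hx0, hh]
  refine hasSum_le ?_ (hasSum_exp_entry (s • A) b y) hsumh
  intro n
  rcases n with _ | k
  · simp [hh, Matrix.one_apply_ne hby]
  · have hpow : ((s • A) ^ (k + 1)) b y = s ^ (k + 1) * (A ^ (k + 1)) b y := by
      rw [smul_pow]; simp [Matrix.smul_apply, smul_eq_mul]
    rw [hpow]
    have hAbd : (A ^ (k + 1)) b y ≤ m * (N * m) ^ k := mat_pow_le hA hm hm0 k b y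
    have hs1 : (0:ℝ) ≤ s ^ (k + 1) := pow_nonneg hs _
    have hfac : ((Nat.factorial (k + 1) : ℝ))⁻¹ ≤ ((Nat.factorial k : ℝ))⁻¹ := by
      apply inv_anti₀
      · exact_mod_cast Nat.factorial_pos k
      · exact_mod_cast Nat.factorial_le (Nat.le_succ k)
    have key : ((Nat.factorial (k + 1) : ℝ))⁻¹ * (s ^ (k + 1) * (A ^ (k + 1)) b y)
        ≤ ((Nat.factorial k : ℝ))⁻¹ * (s ^ (k + 1) * (m * (N * m) ^ k)) := by
      apply mul_le_mul hfac
      · exact mul_le_mul_of_nonneg_left hAbd hs1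
      · exact mul_nonneg hs1 (mat_pow_nonneg hA _ b y)
      · exact inv_nonneg.mpr (Nat.cast_nonneg _)
    refine key.trans (le_of_eq ?_)
    show _ = (s * m) * ((s * N * m) ^ ((k+1) - 1) / Nat.factorial ((k+1) - 1))
    simp only [Nat.add_sub_cancel]
    rw [mul_pow, mul_pow]
    have : (Nat.factorial k : ℝ) ≠ 0 := by exact_mod_cast (Nat.factorial_pos k).ne'
    field_simp
    ring

end Aux

/-- **Boundedness of the bridge jump rates away from the terminal state.** If `Q_{ab} > 0` for all
`a ≠ b`, then for all `a ≠ b` with `b ≠ y` one has `sup_{t∈[0,T₀)} Q^y_{ab}(t) < ∞`. -/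
theorem bridge_generator_bounded {𝒳 : Type*} [Fintype 𝒳] [DecidableEq 𝒳] [Nontrivial 𝒳]
    (Q : Matrix 𝒳 𝒳 ℝ) (hQpos : ∀ a b : 𝒳, a ≠ b → 0 < Q a b) (hQrow : ∀ a, ∑ b, Q a b = 0)
    (T₀ : ℝ) (hT₀ : 0 < T₀) (a b y : 𝒳) (hab : a ≠ b) (hby : b ≠ y) :
    ∃ M : ℝ, ∀ t ∈ Set.Ico (0 : ℝ) T₀, Qbridge Q T₀ y t a b ≤ M := by
  classical
  set N : ℝ := (Fintype.card 𝒳 : ℝ) with hN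
  set c : ℝ := ∑ x, |Q x x| with hc
  set A : Matrix 𝒳 𝒳 ℝ := Q + c • (1 : Matrix 𝒳 𝒳 ℝ) with hA
  have hc0 : 0 ≤ c := Finset.sum_nonneg fun x _ => abs_nonneg _
  have hAentry : ∀ i j, A i j = Q i j + c * (if i = j then 1 else 0) := by
    intro i j
    simp [hA, Matrix.add_apply, Matrix.smul_apply, Matrix.one_apply, smul_eq_mul]
  have hAnn : ∀ i j, 0 ≤ A i j := by
    intro i j
    rw [hAentry]
    by_cases hij : i = j
    · rw [if_pos hij, mul_one]
      have habs : |Q i i| ≤ c := by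
        rw [hc]
        exact Finset.single_le_sum (f := fun x => |Q x x|)
          (fun x _ => abs_nonneg (Q x x)) (Finset.mem_univ i)
      subst hij
      linarith [neg_abs_le (Q i i)]
    · rw [if_neg hij, mul_zero, add_zero]
      exact (hQpos i j hij).le
  have hAoff : ∀ i j, i ≠ j → A i j = Q i j := by
    intro i j hij
    rw [hAentry, if_neg hij, mul_zero, add_zero]
  set m : ℝ := 1 + ∑ i, ∑ j, |A i j| with hm
  have hm1 : (1:ℝ) ≤ m := by
    rw [hm]
    have : (0:ℝ) ≤ ∑ i, ∑ j, |A i j| :=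
      Finset.sum_nonneg fun i _ => Finset.sum_nonneg fun j _ => abs_nonneg _
    linarith
  have hm0 : (0:ℝ) ≤ m := by linarith
  have hmbd : ∀ i j, A i j ≤ m := by
    intro i j
    have h1 : |A i j| ≤ ∑ j', |A i j'| :=
      Finset.single_le_sum (f := fun j' => |A i j'|)
        (fun j' _ => abs_nonneg _) (Finset.mem_univ j)
    have h2 : ∑ j', |A i j'| ≤ ∑ i', ∑ j', |A i' j'| :=
      Finset.single_le_sum (f := fun i' => ∑ j', |A i' j'|)
        (fun i' _ => Finset.sum_nonneg fun j' _ => abs_nonneg _) (Finset.mem_univ i)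
    calc A i j ≤ |A i j| := le_abs_self _
      _ ≤ ∑ i', ∑ j', |A i' j'| := h1.trans h2
      _ ≤ m := by rw [hm]; linarith
  -- relation between exp (s • A) and Pmat Q s
  have hshift : ∀ s : ℝ, NormedSpace.exp (s • A) = Real.exp (s * c) • Pmat Q s := by
    intro s
    have hdiag : Matrix.diagonal (fun _ : 𝒳 => s * c) = (s * c) • (1 : Matrix 𝒳 𝒳 ℝ) := by
      ext i j
      by_cases h : i = j <;>
        simp [Matrix.diagonal, Matrix.one_apply, Matrix.smul_apply, smul_eq_mul, h]
    have hdecomp : s • A = s • Q + Matrix.diagonal (fun _ : 𝒳 => s * c) := by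
      rw [hA, smul_add, hdiag, smul_smul]
    have hcomm : Commute (s • Q) (Matrix.diagonal (fun _ : 𝒳 => s * c)) := by
      rw [hdiag]
      exact (Commute.one_right (s • Q)).smul_right _
    rw [hdecomp, Matrix.exp_add_of_commute _ _ hcomm, Matrix.exp_diagonal]
    have hde : NormedSpace.exp (fun _ : 𝒳 => s * c) = fun _ : 𝒳 => Real.exp (s * c) := by
      funext i
      rw [Pi.coe_exp, ← Real.exp_eq_exp_ℝ]
    rw [hde]
    have hdiag2 : Matrix.diagonal (fun _ : 𝒳 => Real.exp (s * c))
        = Real.exp (s * c) • (1 : Matrix 𝒳 𝒳 ℝ) := by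
      ext i j
      by_cases h : i = j <;>
        simp [Matrix.diagonal, Matrix.one_apply, Matrix.smul_apply, smul_eq_mul, h]
    rw [hdiag2, mul_smul_comm, mul_one]
    rfl
  have hPentry : ∀ (s : ℝ) (i j : 𝒳),
      NormedSpace.exp (s • A) i j = Real.exp (s * c) * Pmat Q s i j := by
    intro s i j
    rw [hshift s]
    simp [Matrix.smul_apply, smul_eq_mul]
  have hE : ∀ s : ℝ, 0 < Real.exp (s * c) := fun s => Real.exp_pos _
  -- the key ratio bound
  obtain ⟨C, hC0, hCbd⟩ :
      ∃ C : ℝ, 0 ≤ C ∧ ∀ s, 0 < s → s ≤ T₀ →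
        0 < Pmat Q s a y ∧ Pmat Q s b y ≤ C * Pmat Q s a y := by
    have hBnn : ∀ s : ℝ, 0 ≤ s → ∀ i j, 0 ≤ (s • A) i j := by
      intro s hs i j
      have := mul_nonneg hs (hAnn i j)
      simpa [Matrix.smul_apply, smul_eq_mul] using this
    have hub : ∀ s, 0 < s → s ≤ T₀ →
        Pmat Q s b y ≤ (Real.exp (s * c))⁻¹ * (s * (m * Real.exp (T₀ * N * m))) := by
      intro s hs hsT
      have h1 : NormedSpace.exp (s • A) b y ≤ s * m * Real.exp (s * N * m) :=
        exp_entry_le hAnn hmbd hm0 hs.le hby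
      have h2 : Real.exp (s * N * m) ≤ Real.exp (T₀ * N * m) := by
        apply Real.exp_le_exp.mpr
        have hNm : 0 ≤ N * m := mul_nonneg (Nat.cast_nonneg _) hm0
        calc s * N * m = s * (N * m) := by ring
          _ ≤ T₀ * (N * m) := mul_le_mul_of_nonneg_right hsT hNm
          _ = T₀ * N * m := by ring
      have h3 : NormedSpace.exp (s • A) b y ≤ s * (m * Real.exp (T₀ * N * m)) := by
        calc NormedSpace.exp (s • A) b y ≤ s * m * Real.exp (s * N * m) := h1
          _ ≤ s * m * Real.exp (T₀ * N * m) :=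
              mul_le_mul_of_nonneg_left h2 (mul_nonneg hs.le hm0)
          _ = s * (m * Real.exp (T₀ * N * m)) := by ring
      rw [hPentry s b y] at h3
      calc Pmat Q s b y = (Real.exp (s * c))⁻¹ * (Real.exp (s * c) * Pmat Q s b y) := by
            field_simp
        _ ≤ (Real.exp (s * c))⁻¹ * (s * (m * Real.exp (T₀ * N * m))) :=
            mul_le_mul_of_nonneg_left h3 (inv_nonneg.mpr (hE s).le)
    by_cases hay : a = y
    · subst hay
      refine ⟨T₀ * (m * Real.exp (T₀ * N * m)), by positivity, ?_⟩
      intro s hs hsT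
      have hlow : 1 ≤ Real.exp (s * c) * Pmat Q s a a := by
        have h0 := exp_entry_ge (hBnn s hs.le) 0 a a
        rw [hPentry s a a] at h0
        simpa [Matrix.one_apply] using h0
      have hpos : 0 < Pmat Q s a a := by nlinarith [hE s]
      refine ⟨hpos, ?_⟩
      have hPge : (Real.exp (s * c))⁻¹ ≤ Pmat Q s a a := by
        rw [inv_le_iff_one_le_mul₀ (hE s)]
        linarith [hlow, mul_comm (Real.exp (s * c)) (Pmat Q s a a)]
      calc Pmat Q s b a ≤ (Real.exp (s * c))⁻¹ * (s * (m * Real.exp (T₀ * N * m))) :=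
            hub s hs hsT
        _ = (s * (m * Real.exp (T₀ * N * m))) * (Real.exp (s * c))⁻¹ := by ring
        _ ≤ (T₀ * (m * Real.exp (T₀ * N * m))) * Pmat Q s a a := by
            apply mul_le_mul ?_ hPge (inv_nonneg.mpr (hE s).le) (by positivity)
            exact mul_le_mul_of_nonneg_right hsT (by positivity)
    · have hqay : 0 < Q a y := hQpos a y hay
      refine ⟨m * Real.exp (T₀ * N * m) / Q a y,
        div_nonneg (by positivity) hqay.le, ?_⟩
      intro s hs hsT
      have hlow : s * Q a y ≤ Real.exp (s * c) * Pmat Q s a y := by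
        have h0 := exp_entry_ge (hBnn s hs.le) 1 a y
        rw [hPentry s a y] at h0
        simpa [pow_one, Matrix.smul_apply, smul_eq_mul, hAoff a y hay] using h0
      have hsq : 0 < s * Q a y := mul_pos hs hqay
      have hpos : 0 < Pmat Q s a y := by nlinarith [hE s]
      refine ⟨hpos, ?_⟩
      have hPge : (Real.exp (s * c))⁻¹ * (s * Q a y) ≤ Pmat Q s a y := by
        rw [inv_mul_le_iff₀ (hE s)]
        exact hlow
      calc Pmat Q s b y ≤ (Real.exp (s * c))⁻¹ * (s * (m * Real.exp (T₀ * N * m))) :=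
            hub s hs hsT
        _ = (m * Real.exp (T₀ * N * m) / Q a y) * ((Real.exp (s * c))⁻¹ * (s * Q a y)) := by
            field_simp
        _ ≤ (m * Real.exp (T₀ * N * m) / Q a y) * Pmat Q s a y :=
            mul_le_mul_of_nonneg_left hPge (div_nonneg (by positivity) hqay.le)
  refine ⟨Q a b * C, ?_⟩
  rintro t ⟨ht0, htT⟩
  have hs0 : 0 < T₀ - t := by linarith
  have hsT : T₀ - t ≤ T₀ := by linarith
  obtain ⟨hpos, hle⟩ := hCbd (T₀ - t) hs0 hsT
  rw [Qbridge, if_neg hab, zero_mul, sub_zero, div_le_iff₀ hpos]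
  calc Q a b * Pmat Q (T₀ - t) b y ≤ Q a b * (C * Pmat Q (T₀ - t) a y) :=
        mul_le_mul_of_nonneg_left hle (hQpos a b hab).le
    _ = Q a b * C * Pmat Q (T₀ - t) a y := by ring
end
end

section
/- (Minimizer of the flux rate functional.) Let π ∈ 𝒫(𝒳) be the unique invariant distribution of Q, i.e. Σ_x π_x Q_{xy} = 0 for all y. Define I_BFG(ρ,j) := Σ_{x≠y} s( j_{xy} | ρ_x Q_{xy} ) if Σ_{y≠x}(j_{xy} − j_{yx}) = 0 for all x and j_{xy} = 0 whenever ρ_x Q_{xy} = 0, and I_BFG(ρ,j) := ∞ otherwise, for ρ ∈ 𝒫(𝒳) and j ∈ [0,∞)^{ {(x,y) : x≠y} }. Then I_BFG(ρ,j) ≥ 0 for all (ρ,j), and I_BFG(ρ,j) = 0 if and only if ρ = π and j_{xy} = π_x Q_{xy} for all x ≠ y. -/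
open MeasureTheory ProbabilityTheory Filter
open scoped ENNReal Classical

noncomputable section

/-- The ℓ¹-norm on `ℝ^d`. -/
def l1norm {d : ℕ} (a : Fin d → ℝ) : ℝ := ∑ i, |a i|

/-- Euclidean dot product on `ℝ^d`. -/
def dotp {d : ℕ} (l a : Fin d → ℝ) : ℝ := ∑ i, l i * a i

/-- The logarithmic moment generating function `φ(λ) = log ∫ e^{λ·a} q(da) ∈ (-∞,∞]`. -/
def logMGF {d : ℕ} (q : Measure (Fin d → ℝ)) (l : Fin d → ℝ) : EReal :=
  ENNReal.log (∫⁻ a, ENNReal.ofReal (Real.exp (dotp l a)) ∂q)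

/-- Legendre transform `φ*(a) = sup_λ [λ·a - φ(λ)]`. -/
def cramerTransform {d : ℕ} (q : Measure (Fin d → ℝ)) (a : Fin d → ℝ) : EReal :=
  ⨆ l : Fin d → ℝ, ((dotp l a : ℝ) : EReal) - logMGF q l

/-- `φ_{|·|}(s) = log ∫ e^{s|a|₁} q(da)`. -/
def logMGFAbs {d : ℕ} (q : Measure (Fin d → ℝ)) (s : ℝ) : EReal :=
  ENNReal.log (∫⁻ a, ENNReal.ofReal (Real.exp (s * l1norm a)) ∂q)

/-- `φ*_{|·|}(r) = sup_s [rs - φ_{|·|}(s)]`. -/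
def cramerTransformAbs {d : ℕ} (q : Measure (Fin d → ℝ)) (r : ℝ) : EReal :=
  ⨆ s : ℝ, ((r * s : ℝ) : EReal) - logMGFAbs q s

/-- Superlinear growth: `liminf_{r→∞} φ*_{|·|}(r)/r = ∞`. -/
def Superlinear {d : ℕ} (q : Measure (Fin d → ℝ)) : Prop :=
  Filter.liminf (fun r : ℝ => cramerTransformAbs q r / (r : EReal)) Filter.atTop = ⊤

/-- The Boltzmann function `s(a|b)`. -/
def sEnt (a b : ℝ) : EReal :=
  if 0 < a ∧ 0 < b then ((a * Real.log (a / b) - a + b : ℝ) : EReal)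
  else if a = 0 ∧ 0 ≤ b then ((b : ℝ) : EReal)
  else ⊤

/-- The flux rate functional `I_BFG`. -/
def IBFG {𝒳 : Type*} [Fintype 𝒳] [DecidableEq 𝒳] (Q : Matrix 𝒳 𝒳 ℝ)
    (ρ : 𝒳 → ℝ) (j : 𝒳 × 𝒳 → ℝ) : EReal :=
  if (∀ x, ∑ y ∈ Finset.univ.erase x, (j (x, y) - j (y, x)) = 0) ∧
      (∀ x y, x ≠ y → ρ x * Q x y = 0 → j (x, y) = 0) then
    ∑ p ∈ Finset.univ.filter (fun p : 𝒳 × 𝒳 => p.1 ≠ p.2), sEnt (j p) (ρ p.1 * Q p.1 p.2)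
  else ⊤

lemma sEnt_nonneg (a b : ℝ) : 0 ≤ sEnt a b := by
  unfold sEnt
  split_ifs with h1 h2
  · obtain ⟨ha, hb⟩ := h1
    have hlog : Real.log (b / a) ≤ b / a - 1 :=
      Real.log_le_sub_one_of_pos (by positivity)
    have heq : Real.log (b / a) = -Real.log (a / b) := by
      rw [← Real.log_inv, inv_div]
    rw [heq] at hlog
    have hmul := mul_le_mul_of_nonneg_left hlog ha.le
    have hab : a * (b / a) = b := by field_simp
    rw [show ((0:EReal) = ((0:ℝ):EReal)) from rfl, EReal.coe_le_coe_iff]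
    nlinarith
  · exact_mod_cast h2.2
  · exact le_top

lemma sEnt_eq_zero_iff {a b : ℝ} (ha : 0 ≤ a) : sEnt a b = 0 ↔ a = b := by
  unfold sEnt
  split_ifs with h1 h2
  · obtain ⟨ha', hb⟩ := h1
    rw [show ((0:EReal) = ((0:ℝ):EReal)) from rfl, EReal.coe_eq_coe_iff]
    constructor
    · intro h
      by_contra hne
      have hba : b / a ≠ 1 := by
        intro hh
        apply hne
        field_simp at hh
        linarith
      have hlog : Real.log (b / a) < b / a - 1 :=
        Real.log_lt_sub_one_of_pos (by positivity) hba
      have heq : Real.log (b / a) = -Real.log (a / b) := by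
        rw [← Real.log_inv, inv_div]
      rw [heq] at hlog
      have hmul := mul_lt_mul_of_pos_left hlog ha'
      have hab : a * (b / a) = b := by field_simp
      nlinarith
    · rintro rfl
      rw [div_self (ne_of_gt ha'), Real.log_one]
      ring
  · constructor
    · intro h
      have hb0 : b = 0 := by exact_mod_cast h
      rw [h2.1, hb0]
    · intro h
      simp [← h, h2.1]
  · constructor
    · intro h; exact absurd h (by simp)
    · intro h
      subst h
      rcases eq_or_lt_of_le ha with h0 | h0
      · exact absurd ⟨h0.symm, ha⟩ h2
      · exact absurd ⟨h0, h0⟩ h1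

/-- If `j (x,y) = σ x * Q x y` off-diagonal and `j` is divergence-free, then `σ` is invariant. -/
lemma invariance_of_div_free {𝒳 : Type*} [Fintype 𝒳] [DecidableEq 𝒳]
    (Q : Matrix 𝒳 𝒳 ℝ) (hQrow : ∀ x, ∑ y, Q x y = 0) (σ : 𝒳 → ℝ)
    (hdf : ∀ x, ∑ y ∈ Finset.univ.erase x, (σ x * Q x y - σ y * Q y x) = 0) :
    ∀ y, ∑ x, σ x * Q x y = 0 := by
  intro y
  have hd := hdf y
  rw [Finset.sum_sub_distrib] at hd
  have e1 : ∑ z ∈ Finset.univ.erase y, σ y * Q y z = -(σ y * Q y y) := by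
    rw [← Finset.mul_sum, Finset.sum_erase_eq_sub (Finset.mem_univ y), hQrow y]
    ring
  have e2 : ∑ z ∈ Finset.univ.erase y, σ z * Q z y
      = (∑ z, σ z * Q z y) - σ y * Q y y := by
    rw [Finset.sum_erase_eq_sub (Finset.mem_univ y)]
  rw [e1, e2] at hd
  linarith

/-- **Minimizer of the flux rate functional.** If `π` is the unique invariant distribution of the
irreducible generator `Q`, then `I_BFG ≥ 0`, with equality exactly at `ρ = π`,
`j_{xy} = π_x Q_{xy}`. -/
theorem IBFG_nonneg_eq_zero_iff {𝒳 : Type*} [Fintype 𝒳] [DecidableEq 𝒳] [Nontrivial 𝒳]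
    (Q : Matrix 𝒳 𝒳 ℝ) (hQoff : ∀ x y, x ≠ y → 0 ≤ Q x y) (hQrow : ∀ x, ∑ y, Q x y = 0)
    (hirr : ∀ x y : 𝒳, ∃ (k : ℕ) (z : ℕ → 𝒳), z 0 = x ∧ z k = y ∧
      ∀ i < k, 0 < Q (z i) (z (i + 1)))
    (π : 𝒳 → ℝ) (hπ : π ∈ stdSimplex ℝ 𝒳) (hπinv : ∀ y, ∑ x, π x * Q x y = 0)
    (hπuniq : ∀ π' ∈ stdSimplex ℝ 𝒳, (∀ y, ∑ x, π' x * Q x y = 0) → π' = π)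
    (ρ : 𝒳 → ℝ) (hρ : ρ ∈ stdSimplex ℝ 𝒳) (j : 𝒳 × 𝒳 → ℝ) (hj : ∀ p, 0 ≤ j p) :
    0 ≤ IBFG Q ρ j ∧
      (IBFG Q ρ j = 0 ↔ ρ = π ∧ ∀ p : 𝒳 × 𝒳, p.1 ≠ p.2 → j p = π p.1 * Q p.1 p.2) := by
  classical
  set S : Finset (𝒳 × 𝒳) := Finset.univ.filter (fun p : 𝒳 × 𝒳 => p.1 ≠ p.2) with hS
  have hterm : ∀ p ∈ S, (0 : EReal) ≤ sEnt (j p) (ρ p.1 * Q p.1 p.2) :=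
    fun p _ => sEnt_nonneg _ _
  refine ⟨?_, ?_, ?_⟩
  · unfold IBFG
    split_ifs with h
    · exact Finset.sum_nonneg hterm
    · exact le_top
  · -- IBFG = 0 → ρ = π ∧ j = πQ
    intro h0
    unfold IBFG at h0
    split_ifs at h0 with hcond
    · have hzero : ∀ p ∈ S, sEnt (j p) (ρ p.1 * Q p.1 p.2) = 0 := by
        intro p hp
        refine le_antisymm ?_ (hterm p hp)
        calc sEnt (j p) (ρ p.1 * Q p.1 p.2)
            ≤ ∑ q ∈ S, sEnt (j q) (ρ q.1 * Q q.1 q.2) := Finset.single_le_sum hterm hp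
          _ = 0 := h0
      have hjq : ∀ p : 𝒳 × 𝒳, p.1 ≠ p.2 → j p = ρ p.1 * Q p.1 p.2 := by
        intro p hp
        exact (sEnt_eq_zero_iff (hj p)).1 (hzero p (by simp [hS, hp]))
      have hdf : ∀ x, ∑ y ∈ Finset.univ.erase x, (ρ x * Q x y - ρ y * Q y x) = 0 := by
        intro x
        rw [← hcond.1 x]
        apply Finset.sum_congr rfl
        intro z hz
        have hzx : z ≠ x := Finset.ne_of_mem_erase hz
        rw [hjq (x, z) hzx.symm, hjq (z, x) hzx]
      have hρπ : ρ = π := hπuniq ρ hρ (invariance_of_div_free Q hQrow ρ hdf)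
      refine ⟨hρπ, fun p hp => ?_⟩
      rw [hjq p hp, hρπ]
    · exact absurd h0 (by simp)
  · -- converse
    rintro ⟨rfl, hjπ⟩
    unfold IBFG
    rw [if_pos]
    · apply Finset.sum_eq_zero
      intro p hp
      have hp' : p.1 ≠ p.2 := by simpa [hS] using hp
      rw [hjπ p hp']
      exact (sEnt_eq_zero_iff (mul_nonneg (hπ.1 p.1) (hQoff _ _ hp'))).2 rfl
    · constructor
      · intro x
        have : ∑ y ∈ Finset.univ.erase x, (j (x, y) - j (y, x))
            = ∑ y ∈ Finset.univ.erase x, (ρ x * Q x y - ρ y * Q y x) := by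
          apply Finset.sum_congr rfl
          intro z hz
          have hzx : z ≠ x := Finset.ne_of_mem_erase hz
          rw [hjπ (x, z) hzx.symm, hjπ (z, x) hzx]
        rw [this, Finset.sum_sub_distrib, ← Finset.mul_sum,
          Finset.sum_erase_eq_sub (Finset.mem_univ x),
          Finset.sum_erase_eq_sub (Finset.mem_univ x), hQrow x, hπinv x]
        ring
      · intro x y hxy h0
        rw [hjπ (x, y) hxy]
        exact h0
end
end
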